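/- arXiv:0804.1419 — 9 statements merged into one kernel-verified Lean document; each statement's English description precedes it below -/
import Mathlib

section
/- Let a₁, a₂ be linearly independent vectors in the Euclidean plane ℝ² and let t > 0. Let s = inf{‖v‖ : v ∈ ℤ·(a₁/2) + ℤ·a₂, v ≠ 0} be the length of a shortest nonzero vector of the lattice generated by a₁/2 and a₂. Then (min s t)³ ≤ (1/√3)·|det(a₁, a₂)|·t. -/
/-!
Hermite's inequality in dimension two. Take a primitive lattice vector `x` with `‖x‖` close to the
minimum `s`, complete it to a lattice basis `(x, y)` by Bézout and reduce `y` modulo `x` so that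
`|⟪x, y⟫| ≤ ‖x‖² / 2`. The Gram determinant `G` is the same for every lattice basis, hence
`G = ‖x‖²‖y‖² - ⟪x, y⟫² ≥ ‖x‖² s² - ‖x‖⁴ / 4 ≥ 3 s⁴ / 4` as long as `‖x‖² ≤ 3 s²`.
In the plane `G = det²`, so `s² ≤ (2/√3) |det (a₁/2, a₂)| = |det (a₁, a₂)| / √3`,
and `min s t ^ 3 ≤ s² t`.
-/

open Real RealInnerProductSpace

variable {E : Type*} [NormedAddCommGroup E]

noncomputable def minNorm (u v : E) : ℝ :=
  sInf {r : ℝ | ∃ m n : ℤ, m • u + n • v ≠ 0 ∧ r = ‖m • u + n • v‖}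

lemma minNorm_nonneg (u v : E) : 0 ≤ minNorm u v :=
  Real.sInf_nonneg (by rintro _ ⟨m, n, -, rfl⟩; positivity)

lemma minNorm_le_norm {u v x : E} (hx : x ∈ Submodule.span ℤ {u, v}) (hx0 : x ≠ 0) :
    minNorm u v ≤ ‖x‖ := by
  obtain ⟨m, n, rfl⟩ := Submodule.mem_span_pair.1 hx
  exact csInf_le ⟨0, by rintro _ ⟨m, n, -, rfl⟩; positivity⟩ ⟨m, n, hx0, rfl⟩

lemma exists_isCoprime_norm_lt [NormedSpace ℝ E] {u v : E} (hu : u ≠ 0) {r : ℝ}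
    (hr : minNorm u v < r) : ∃ m n : ℤ, IsCoprime m n ∧ ‖m • u + n • v‖ < r := by
  have hne : {r : ℝ | ∃ m n : ℤ, m • u + n • v ≠ 0 ∧ r = ‖m • u + n • v‖}.Nonempty :=
    ⟨_, 1, 0, by simpa, rfl⟩
  obtain ⟨_, ⟨m, n, hmn, rfl⟩, hlt⟩ := exists_lt_of_csInf_lt hne hr
  have hgcd : 0 < Int.gcd m n := Int.gcd_pos_iff.2 <| by
    by_contra! h
    simp [h.1, h.2] at hmn
  obtain ⟨g, m', n', hg, hcop, rfl, rfl⟩ := Int.exists_gcd_one' hgcd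
  refine ⟨m', n', Int.isCoprime_iff_gcd_eq_one.2 hcop, lt_of_le_of_lt ?_ hlt⟩
  have : (m' * g) • u + (n' * g) • v = (g : ℤ) • (m' • u + n' • v) := by module
  rw [this, norm_zsmul ℝ]
  exact le_mul_of_one_le_left (norm_nonneg _) (by simpa using Nat.one_le_iff_ne_zero.2 hg.ne')

section Gram

variable [InnerProductSpace ℝ E]

noncomputable def gramDet (u v : E) : ℝ := (Matrix.gram ℝ ![u, v]).det

lemma gramDet_eq (u v : E) : gramDet u v = ⟪u, u⟫ * ⟪v, v⟫ - ⟪u, v⟫ ^ 2 := by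
  simp [gramDet, Matrix.det_fin_two, Matrix.gram_apply, real_inner_comm u v, sq]

lemma gramDet_eq_norm (u v : E) : gramDet u v = ‖u‖ ^ 2 * ‖v‖ ^ 2 - ⟪u, v⟫ ^ 2 := by
  rw [gramDet_eq, real_inner_self_eq_norm_sq, real_inner_self_eq_norm_sq]

lemma gramDet_pos {u v : E} (h : LinearIndependent ℝ ![u, v]) : 0 < gramDet u v :=
  (Matrix.posDef_gram_of_linearIndependent h).det_pos

lemma gramDet_add_smul (u v : E) (a b c d : ℝ) :
    gramDet (a • u + b • v) (c • u + d • v) = (a * d - b * c) ^ 2 * gramDet u v := by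
  simp only [gramDet_eq, inner_add_left, inner_add_right, real_inner_smul_left,
    real_inner_smul_right, real_inner_comm u v]
  ring

lemma gramDet_sub_smul_right (x y : E) (c : ℝ) : gramDet x (y - c • x) = gramDet x y := by
  simp only [gramDet_eq, inner_sub_left, inner_sub_right, real_inner_smul_left,
    real_inner_smul_right, real_inner_comm x y]
  ring

@[simp]
lemma gramDet_zero_right (x : E) : gramDet x 0 = 0 := by
  simp [gramDet_eq]

@[simp]
lemma gramDet_zero_left (y : E) : gramDet 0 y = 0 := by
  simp [gramDet_eq]

lemma exists_gramDet_eq_of_isCoprime (u v : E) {m n : ℤ} (h : IsCoprime m n) :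
    ∃ p q : ℤ, gramDet (m • u + n • v) (p • u + q • v) = gramDet u v := by
  obtain ⟨a, b, hab⟩ := h
  refine ⟨-b, a, ?_⟩
  simp only [← Int.cast_smul_eq_zsmul ℝ, gramDet_add_smul]
  have hdet : ((m : ℝ) * a - n * ((-b : ℤ) : ℝ)) ^ 2 = 1 := by
    exact_mod_cast (by linear_combination (m * a + n * b + 1) * hab :
      (m * a - n * -b) ^ 2 = (1 : ℤ))
  rw [hdet, one_mul]

lemma exists_abs_inner_sub_zsmul_le (x y : E) :
    ∃ k : ℤ, |⟪x, y - k • x⟫| ≤ ‖x‖ ^ 2 / 2 := by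
  rcases eq_or_ne x 0 with rfl | hx
  · simp
  have hx2 : 0 < ‖x‖ ^ 2 := by positivity
  refine ⟨round (⟪x, y⟫ / ‖x‖ ^ 2), ?_⟩
  have : ⟪x, y - round (⟪x, y⟫ / ‖x‖ ^ 2) • x⟫ =
      (⟪x, y⟫ / ‖x‖ ^ 2 - round (⟪x, y⟫ / ‖x‖ ^ 2)) * ‖x‖ ^ 2 := by
    rw [inner_sub_right, ← Int.cast_smul_eq_zsmul ℝ, real_inner_smul_right,
      real_inner_self_eq_norm_sq]
    field_simp
  rw [this, abs_mul, abs_of_pos hx2]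
  nlinarith [abs_sub_round (⟪x, y⟫ / ‖x‖ ^ 2)]

theorem three_mul_minNorm_pow_four_le {u v : E} (h : LinearIndependent ℝ ![u, v]) :
    3 * minNorm u v ^ 4 ≤ 4 * gramDet u v := by
  have hG := gramDet_pos h
  rcases (minNorm_nonneg u v).eq_or_lt with hs | hs
  · rw [← hs]; linarith
  set s := minNorm u v
  have hu : u ≠ 0 := h.ne_zero 0
  obtain ⟨m, n, hmn, hx⟩ := exists_isCoprime_norm_lt hu (show s < 3 / 2 * s by linarith)
  obtain ⟨p, q, hpq⟩ := exists_gramDet_eq_of_isCoprime u v hmn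
  set x := m • u + n • v
  obtain ⟨k, hk⟩ := exists_abs_inner_sub_zsmul_le x (p • u + q • v)
  have hxy : gramDet x (p • u + q • v - k • x) = gramDet u v := by
    rw [← hpq, ← Int.cast_smul_eq_zsmul ℝ k x]
    exact gramDet_sub_smul_right x _ k
  set y := p • u + q • v - k • x
  have hxL : x ∈ Submodule.span ℤ {u, v} := Submodule.mem_span_pair.2 ⟨m, n, rfl⟩
  have hyL : y ∈ Submodule.span ℤ {u, v} :=
    sub_mem (Submodule.mem_span_pair.2 ⟨p, q, rfl⟩) (Submodule.smul_mem _ k hxL)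
  have hsx := minNorm_le_norm hxL (by rintro hx0; simp [hx0] at hxy; linarith)
  have hsy := minNorm_le_norm hyL (by rintro hy0; simp [hy0] at hxy; linarith)
  rw [gramDet_eq_norm] at hxy
  have hk2 : ⟪x, y⟫ ^ 2 ≤ (‖x‖ ^ 2 / 2) ^ 2 := sq_le_sq' (abs_le.1 hk).1 (abs_le.1 hk).2
  -- `4 A s² - A² - 3 s⁴ = (A - s²)(3 s² - A) ≥ 0` for `A = ‖x‖² ∈ [s², 9 s² / 4]`
  have hA : 3 * s ^ 4 ≤ 4 * ‖x‖ ^ 2 * s ^ 2 - ‖x‖ ^ 4 := by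
    nlinarith [mul_nonneg (sub_nonneg.2 (pow_le_pow_left₀ hs.le hsx 2))
      (sub_nonneg.2 (pow_le_pow_left₀ (norm_nonneg x) hx.le 2))]
  nlinarith [pow_le_pow_left₀ hs.le hsy 2, sq_nonneg ‖x‖]

end Gram

lemma gramDet_eq_det_sq (a b : EuclideanSpace ℝ (Fin 2)) :
    gramDet a b = (a 0 * b 1 - a 1 * b 0) ^ 2 := by
  simp only [gramDet_eq, PiLp.inner_apply, Fin.sum_univ_two, RCLike.inner_apply, conj_trivial]
  ring

theorem minNorm_sq_le (a b : EuclideanSpace ℝ (Fin 2)) (h : LinearIndependent ℝ ![a, b]) :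
    minNorm a b ^ 2 ≤ 2 / √3 * |a 0 * b 1 - a 1 * b 0| := by
  have hermite := three_mul_minNorm_pow_four_le h
  rw [gramDet_eq_det_sq] at hermite
  rw [div_mul_eq_mul_div, le_div_iff₀ (by positivity),
    ← pow_le_pow_iff_left₀ (by positivity) (by positivity) two_ne_zero,
    mul_pow, mul_pow, sq_sqrt (by norm_num : (0:ℝ) ≤ 3), sq_abs]
  linarith

/-- Flat systolic estimate for type `B₁` Bieberbach 3-manifolds:
if `a₁, a₂` are linearly independent plane vectors, `t > 0`, and `s` is the
length of a shortest nonzero vector of the lattice generated by `a₁/2` and `a₂`,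
then `(min s t)³ ≤ (1/√3)·|det(a₁,a₂)|·t`. -/
theorem stmt0 (a₁ a₂ : EuclideanSpace ℝ (Fin 2))
    (hind : LinearIndependent ℝ ![a₁, a₂]) (t : ℝ) (ht : 0 < t)
    (s : ℝ)
    (hs : s = sInf {r : ℝ | ∃ m n : ℤ,
      m • ((2:ℝ)⁻¹ • a₁) + n • a₂ ≠ 0 ∧ r = ‖m • ((2:ℝ)⁻¹ • a₁) + n • a₂‖}) :
    (min s t) ^ 3 ≤ (1 / Real.sqrt 3) * |a₁ 0 * a₂ 1 - a₁ 1 * a₂ 0| * t := by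
  have hind' : LinearIndependent ℝ ![(2:ℝ)⁻¹ • a₁, a₂] := by
    rw [LinearIndependent.pair_iff] at hind ⊢
    intro c d hcd
    obtain ⟨hc, hd⟩ := hind (c * 2⁻¹) d (by rwa [mul_smul])
    exact ⟨by simpa using hc, hd⟩
  have hs' : s = minNorm ((2:ℝ)⁻¹ • a₁) a₂ := hs
  have hs2 : s ^ 2 ≤ 1 / √3 * |a₁ 0 * a₂ 1 - a₁ 1 * a₂ 0| := by
    have h := minNorm_sq_le _ _ hind'
    rw [← hs', PiLp.smul_apply, PiLp.smul_apply, smul_eq_mul, smul_eq_mul,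
      show 2⁻¹ * a₁ 0 * a₂ 1 - 2⁻¹ * a₁ 1 * a₂ 0 = (a₁ 0 * a₂ 1 - a₁ 1 * a₂ 0) / 2 by ring,
      abs_div, abs_two] at h
    exact h.trans_eq (by ring)
  have hmin : 0 ≤ min s t := le_min (hs' ▸ minNorm_nonneg _ _) ht.le
  calc min s t ^ 3 = min s t ^ 2 * min s t := by ring
    _ ≤ s ^ 2 * t := mul_le_mul (pow_le_pow_left₀ hmin (min_le_left s t) 2) (min_le_right s t)
        hmin (sq_nonneg s)
    _ ≤ _ := mul_le_mul_of_nonneg_right hs2 ht.le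
end

section
/- Let a₁, a₂ be vectors in the Euclidean plane ℝ² with ‖a₁‖ = 2‖a₂‖ = 2t for some t > 0 and with inner product ⟪a₁, a₂⟫ = ‖a₁‖·‖a₂‖/2 (i.e. the angle between a₁ and a₂ is π/3). Let s = inf{‖v‖ : v ∈ ℤ·(a₁/2) + ℤ·a₂, v ≠ 0}. Then s = t and (min s t)³ = (1/√3)·|det(a₁, a₂)|·t. -/
/-!
The vectors `a₁/2` and `a₂` have the same length `t` and meet at angle `π/3`, so the norm form of
the lattice they span is `t²(m² + mn + n²)`. This integral form takes the value `1` at `(1, 0)` and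
is at least `1` away from the origin, hence the systole is `t`. Lagrange's identity
`det(a₁, a₂)² = ‖a₁‖²‖a₂‖² - ⟪a₁, a₂⟫² = 4t⁴ - t⁴` gives `|det(a₁, a₂)| = √3 t²`.
-/

open Real
open scoped RealInnerProductSpace

theorem one_le_sq_add_mul_add_sq {m n : ℤ} (h : m ≠ 0 ∨ n ≠ 0) : 1 ≤ m ^ 2 + m * n + n ^ 2 := by
  rcases eq_or_ne n 0 with rfl | hn
  · have hm : m ≠ 0 := h.resolve_right (not_not.mpr rfl)
    nlinarith [Int.one_le_abs hm, sq_abs m]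
  · nlinarith [Int.one_le_abs hn, sq_abs n, sq_nonneg (2 * m + n)]

section Hexagonal

variable {E : Type*} [NormedAddCommGroup E] [InnerProductSpace ℝ E] {u v : E} {t : ℝ}

theorem norm_smul_add_smul_sq_of_hexagonal (hu : ‖u‖ = t) (hv : ‖v‖ = t) (huv : ⟪u, v⟫ = t ^ 2 / 2)
    (x y : ℝ) : ‖x • u + y • v‖ ^ 2 = (x ^ 2 + x * y + y ^ 2) * t ^ 2 := by
  rw [norm_add_sq_real, norm_smul, norm_smul, real_inner_smul_left, real_inner_smul_right, huv,
    hu, hv, Real.norm_eq_abs, Real.norm_eq_abs, mul_pow, mul_pow, sq_abs, sq_abs]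
  ring

theorem le_norm_zsmul_add_zsmul_of_hexagonal (hu : ‖u‖ = t) (hv : ‖v‖ = t)
    (huv : ⟪u, v⟫ = t ^ 2 / 2) {m n : ℤ} (hmn : m • u + n • v ≠ 0) : t ≤ ‖m • u + n • v‖ := by
  have hne : m ≠ 0 ∨ n ≠ 0 := by
    by_contra! h
    simp [h.1, h.2] at hmn
  have hform : (1 : ℝ) ≤ (m : ℝ) ^ 2 + m * n + n ^ 2 := by
    exact_mod_cast one_le_sq_add_mul_add_sq hne
  have hsq := norm_smul_add_smul_sq_of_hexagonal hu hv huv m n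
  rw [Int.cast_smul_eq_zsmul, Int.cast_smul_eq_zsmul] at hsq
  refine le_of_pow_le_pow_left₀ two_ne_zero (norm_nonneg _) ?_
  rw [hsq]
  nlinarith [sq_nonneg t]

theorem sInf_norm_zsmul_add_zsmul_of_hexagonal (ht : 0 < t) (hu : ‖u‖ = t) (hv : ‖v‖ = t)
    (huv : ⟪u, v⟫ = t ^ 2 / 2) :
    sInf {r : ℝ | ∃ m n : ℤ, m • u + n • v ≠ 0 ∧ r = ‖m • u + n • v‖} = t := by
  have hmem : t ∈ {r : ℝ | ∃ m n : ℤ, m • u + n • v ≠ 0 ∧ r = ‖m • u + n • v‖} :=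
    ⟨1, 0, by simp [← norm_ne_zero_iff, hu, ht.ne'], by simp [hu]⟩
  refine le_antisymm (csInf_le ⟨0, ?_⟩ hmem) (le_csInf ⟨t, hmem⟩ ?_)
  · rintro r ⟨m, n, -, rfl⟩
    exact norm_nonneg _
  · rintro r ⟨m, n, hmn, rfl⟩
    exact le_norm_zsmul_add_zsmul_of_hexagonal hu hv huv hmn

end Hexagonal

theorem EuclideanSpace.sq_cross_eq_norm_sq_mul_norm_sq_sub_inner_sq
    (x y : EuclideanSpace ℝ (Fin 2)) :
    (x 0 * y 1 - x 1 * y 0) ^ 2 = ‖x‖ ^ 2 * ‖y‖ ^ 2 - ⟪x, y⟫ ^ 2 := by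
  simp only [← real_inner_self_eq_norm_sq, PiLp.inner_apply, Fin.sum_univ_two, RCLike.inner_apply,
    conj_trivial]
  ring

/-- Equality case of the flat systolic estimate for type `B₁`:
if `‖a₁‖ = 2‖a₂‖ = 2t` and the angle between `a₁` and `a₂` is `π/3`
(i.e. `⟪a₁,a₂⟫ = ‖a₁‖‖a₂‖/2`), then the shortest nonzero vector of the lattice
generated by `a₁/2` and `a₂` has length `t` and `(min s t)³ = (1/√3)·|det(a₁,a₂)|·t`. -/
theorem stmt1 (a₁ a₂ : EuclideanSpace ℝ (Fin 2)) (t : ℝ) (ht : 0 < t)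
    (h₁ : ‖a₁‖ = 2 * t) (h₂ : ‖a₂‖ = t)
    (hangle : (inner ℝ a₁ a₂ : ℝ) = ‖a₁‖ * ‖a₂‖ / 2)
    (s : ℝ)
    (hs : s = sInf {r : ℝ | ∃ m n : ℤ,
      m • ((2:ℝ)⁻¹ • a₁) + n • a₂ ≠ 0 ∧ r = ‖m • ((2:ℝ)⁻¹ • a₁) + n • a₂‖}) :
    s = t ∧ (min s t) ^ 3 = (1 / Real.sqrt 3) * |a₁ 0 * a₂ 1 - a₁ 1 * a₂ 0| * t := by
  have hu : ‖(2 : ℝ)⁻¹ • a₁‖ = t := by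
    rw [norm_smul, h₁, norm_inv, Real.norm_ofNat]
    ring
  have huv : ⟪(2 : ℝ)⁻¹ • a₁, a₂⟫ = t ^ 2 / 2 := by
    rw [real_inner_smul_left, hangle, h₁, h₂]
    ring
  have hst : s = t := hs ▸ sInf_norm_zsmul_add_zsmul_of_hexagonal ht hu h₂ huv
  have hdet : |a₁ 0 * a₂ 1 - a₁ 1 * a₂ 0| = √3 * t ^ 2 := by
    have hsq : (a₁ 0 * a₂ 1 - a₁ 1 * a₂ 0) ^ 2 = (√3 * t ^ 2) ^ 2 := by
      rw [EuclideanSpace.sq_cross_eq_norm_sq_mul_norm_sq_sub_inner_sq, hangle, h₁, h₂, mul_pow √3,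
        sq_sqrt zero_le_three]
      ring
    rw [← sqrt_sq_eq_abs, hsq, sqrt_sq (by positivity)]
  refine ⟨hst, ?_⟩
  rw [hst, min_self, hdet]
  field_simp
end

section
/- Let a₁, a₂ be linearly independent vectors in the Euclidean plane ℝ² and let d > 0. Let L = ℤ·a₁ + ℤ·a₂, let m(w) = inf{‖w − v‖ : v ∈ L} denote the distance from a point w ∈ ℝ² to L, and let s(L) = inf{‖v‖ : v ∈ L, v ≠ 0}. Set σ = min{ m(a₁/2), m(a₂/2), 4d, √(m((a₁+a₂)/2)² + 4d²), s(L) }. Then σ³ ≤ (8/√39)·|det(a₁, a₂)|·d. -/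
/-!
Take a shortest nonzero vector `v` of `L`, of length `s`. It is primitive, so it extends to a basis
`(v, u)` of `L`, and replacing `u` by `u - k v` makes `|⟪v, u⟫| ≤ ‖v‖² / 2`. Then `‖u‖ ≥ ‖v‖` and
`det(a₁, a₂)² = ‖v‖²‖u‖² - ⟪v, u⟫² ≥ ‖v‖²‖u‖² - ‖v‖⁴ / 4`.

The classes of `v` and `u` in `L / 2L` are distinct and nonzero, since their coefficient matrix
has determinant 1. A lattice vector in the class of `a₁` or `a₂` has length at least `2σ`, one in
the class of `a₁ + a₂` has length at least `2 m((a₁ + a₂) / 2)`, and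
`σ² ≤ m((a₁ + a₂) / 2)² + 4d²`. So either `‖v‖ ≥ 2σ`, or `‖u‖ ≥ 2σ` and `16d² ≥ 4σ² - ‖v‖²`;
together with `σ ≤ s` and `σ ≤ 4d` this is a polynomial problem in `‖v‖², ‖u‖², d²`, whose
extremal case is `‖v‖² = 3σ²`, `‖u‖² = 4σ²`, `d = σ / 4`.
-/

open Real
open scoped RealInnerProductSpace

theorem AddSubgroup.exists_norm_le_of_discreteTopology {E : Type*} [NormedAddCommGroup E]
    [ProperSpace E] (L : AddSubgroup E) [DiscreteTopology L] {w : E} (hwL : w ∈ L) (hw : w ≠ 0) :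
    ∃ v ∈ L, v ≠ 0 ∧ ∀ x ∈ L, x ≠ 0 → ‖v‖ ≤ ‖x‖ := by
  set K := Metric.closedBall (0 : E) ‖w‖ ∩ ((L : Set E) \ {0})
  have hK : K.Finite := (Metric.finite_isBounded_inter_isClosed DiscreteTopology.isDiscrete
    Metric.isBounded_closedBall L.isClosed_of_discrete).subset
      (Set.inter_subset_inter_right _ Set.sdiff_subset)
  obtain ⟨v, ⟨-, hvL, hv⟩, hmin⟩ := K.exists_min_image norm hK ⟨w, by simp [K, hwL, hw]⟩
  refine ⟨v, hvL, hv, fun x hxL hx => ?_⟩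
  rcases le_or_gt ‖x‖ ‖w‖ with hxw | hxw
  · exact hmin x ⟨by simpa using hxw, hxL, hx⟩
  · exact (hmin w ⟨by simp, hwL, hw⟩).trans hxw.le

theorem abs_inner_sub_round_smul_le {F : Type*} [NormedAddCommGroup F] [InnerProductSpace ℝ F]
    (v u : F) : |⟪v, u - (round (⟪v, u⟫ / ‖v‖ ^ 2) : ℝ) • v⟫| ≤ ‖v‖ ^ 2 / 2 := by
  rcases eq_or_ne v 0 with rfl | hv
  · simp
  have hv2 : 0 < ‖v‖ ^ 2 := by positivity
  set x := ⟪v, u⟫ / ‖v‖ ^ 2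
  have : ⟪v, u - (round x : ℝ) • v⟫ = ‖v‖ ^ 2 * (x - round x) := by
    rw [inner_sub_right, inner_smul_right, real_inner_self_eq_norm_sq, mul_sub,
      mul_div_cancel₀ _ hv2.ne']
    ring
  rw [this, abs_mul, abs_of_pos hv2]
  nlinarith [abs_sub_round x]

theorem odd_add_or_of_mul_sub_mul_eq_one {p q P Q : ℤ} (h : p * Q - q * P = 1) :
    Odd (p + q) ∨ Odd p ∧ Odd q ∧ Odd (P + Q) := by
  have h' : ¬Even (p * Q - q * P) := by rw [h]; decide
  simp only [← Int.not_even_iff_odd, Int.even_add, Int.even_sub, Int.even_mul] at h' ⊢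
  tauto

theorem le_div_sqrt_of_mul_sq_le {c x y : ℝ} (hc : 0 < c) (hy : 0 ≤ y) (h : c * x ^ 2 ≤ y ^ 2) :
    x ≤ y / √c := by
  rw [le_div_iff₀ (Real.sqrt_pos.2 hc)]
  refine abs_le_of_sq_le_sq' ?_ hy |>.2
  rwa [mul_pow, Real.sq_sqrt hc.le, mul_comm]

/-- With `x = σ²`, `S = ‖v‖²`, `N = ‖u‖²`, `A = det(a₁, a₂)²`, `y = d²`. -/
theorem thirty_nine_mul_pow_three_le {x S N A y : ℝ} (hx : 0 ≤ x) (hxS : x ≤ S) (hSN : S ≤ N)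
    (hxN : 4 * x ≤ N) (hxy : x ≤ 16 * y) (hSy : 4 * x - S ≤ 16 * y)
    (hA : S * N - S ^ 2 / 4 ≤ A) : 39 * x ^ 3 ≤ 64 * A * y := by
  have hS : 0 ≤ S := hx.trans hxS
  have hAS : 3 * S ^ 2 / 4 ≤ A := by nlinarith [mul_le_mul_of_nonneg_left hSN hS]
  have hAx : S * (16 * x - S) / 4 ≤ A := by nlinarith [mul_le_mul_of_nonneg_left hxN hS]
  rcases le_total (4 * x) S with h4 | h4
  · have : 12 * x ^ 2 ≤ A := by nlinarith
    nlinarith [mul_le_mul this hxy hx (by nlinarith)]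
  rcases le_total (3 * x) S with h3 | h3
  · have : 39 * x ^ 2 / 4 ≤ A := by nlinarith [mul_nonneg (sub_nonneg.2 h3) (sub_nonneg.2 h4)]
    nlinarith [mul_le_mul this hxy hx (by nlinarith)]
  · have hcubic : 39 * x ^ 3 ≤ S * (16 * x - S) * (4 * x - S) := by
      have : 0 ≤ (S - x) * (13 * x - S) + 3 * S * x := by nlinarith
      nlinarith [mul_nonneg (sub_nonneg.2 h3) this]
    nlinarith [mul_le_mul hAx hSy (by linarith) (by nlinarith)]

section Lattice

variable {E : Type*} [NormedAddCommGroup E] {a₁ a₂ : E}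

theorem zsmul_add_zsmul_eq_zero_iff [Module ℝ E] (hind : LinearIndependent ℝ ![a₁, a₂])
    {p q : ℤ} : p • a₁ + q • a₂ = 0 ↔ p = 0 ∧ q = 0 := by
  refine ⟨fun h => ?_, by rintro ⟨rfl, rfl⟩; simp⟩
  simp only [← Int.cast_smul_eq_zsmul ℝ] at h
  exact_mod_cast LinearIndependent.pair_iff.1 hind _ _ h

theorem isCoprime_of_forall_norm_le [NormedSpace ℝ E] {p q : ℤ} (hv : p • a₁ + q • a₂ ≠ 0)
    (hmin : ∀ p' q' : ℤ, p' • a₁ + q' • a₂ ≠ 0 → ‖p • a₁ + q • a₂‖ ≤ ‖p' • a₁ + q' • a₂‖) :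
    IsCoprime p q := by
  rw [Int.isCoprime_iff_gcd_eq_one]
  obtain ⟨p₁, hp⟩ := Int.gcd_dvd_left p q
  obtain ⟨q₁, hq⟩ := Int.gcd_dvd_right p q
  have hvw : p • a₁ + q • a₂ = (Int.gcd p q : ℤ) • (p₁ • a₁ + q₁ • a₂) := by
    rw [smul_add, smul_smul, smul_smul, ← hp, ← hq]
  have hw : p₁ • a₁ + q₁ • a₂ ≠ 0 := fun h => hv (by rw [hvw, h, smul_zero])
  have hg0 : Int.gcd p q ≠ 0 := fun h => hv (by obtain ⟨rfl, rfl⟩ := Int.gcd_eq_zero_iff.1 h; simp)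
  have hle := hmin p₁ q₁ hw
  rw [hvw, norm_zsmul ℝ] at hle
  have hg1 : (Int.gcd p q : ℝ) ≤ 1 := by
    simpa using (mul_le_iff_le_one_left (norm_pos_iff.2 hw)).1 hle
  have : Int.gcd p q ≤ 1 := by exact_mod_cast hg1
  omega

theorem IsCoprime.exists_mul_sub_mul_eq_one_and_abs_inner_le [InnerProductSpace ℝ E] {p q : ℤ}
    (hpq : IsCoprime p q) :
    ∃ P Q : ℤ, p * Q - q * P = 1 ∧
      |⟪p • a₁ + q • a₂, P • a₁ + Q • a₂⟫| ≤ ‖p • a₁ + q • a₂‖ ^ 2 / 2 := by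
  obtain ⟨Q₀, P₀, h⟩ := hpq
  set v := p • a₁ + q • a₂
  set u₀ := (-P₀) • a₁ + Q₀ • a₂
  set k := round (⟪v, u₀⟫ / ‖v‖ ^ 2)
  refine ⟨-P₀ - k * p, Q₀ - k * q, by linear_combination h, ?_⟩
  convert abs_inner_sub_round_smul_le v u₀ using 4
  simp only [v, u₀, Int.cast_smul_eq_zsmul]
  module

variable (a₁ a₂) in
noncomputable def latticeDist (w : E) : ℝ := sInf {r : ℝ | ∃ p q : ℤ, r = ‖w - (p • a₁ + q • a₂)‖}

theorem latticeDist_nonneg (w : E) : 0 ≤ latticeDist a₁ a₂ w :=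
  le_csInf ⟨_, 0, 0, rfl⟩ (by rintro _ ⟨p, q, rfl⟩; exact norm_nonneg _)

theorem latticeDist_le (w : E) (p q : ℤ) : latticeDist a₁ a₂ w ≤ ‖w - (p • a₁ + q • a₂)‖ :=
  csInf_le ⟨0, by rintro _ ⟨p', q', rfl⟩; exact norm_nonneg _⟩ ⟨p, q, rfl⟩

theorem two_mul_latticeDist_half_le [NormedSpace ℝ E] {i j p q : ℤ} (hp : Even (p - i))
    (hq : Even (q - j)) :
    2 * latticeDist a₁ a₂ ((2 : ℝ)⁻¹ • (i • a₁ + j • a₂)) ≤ ‖p • a₁ + q • a₂‖ := by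
  obtain ⟨k, hk⟩ := hp
  obtain ⟨l, hl⟩ := hq
  have h := latticeDist_le (a₁ := a₁) (a₂ := a₂) ((2 : ℝ)⁻¹ • (i • a₁ + j • a₂)) (-k) (-l)
  rw [show p = i + (k + k) by omega, show q = j + (l + l) by omega]
  rwa [show (2 : ℝ)⁻¹ • (i • a₁ + j • a₂) - ((-k) • a₁ + (-l) • a₂) =
      (2 : ℝ)⁻¹ • ((i + (k + k)) • a₁ + (j + (l + l)) • a₂) by module, norm_smul,
    norm_inv, Real.norm_two, inv_mul_eq_div, le_div_iff₀' two_pos] at h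

theorem two_mul_le_norm_of_odd_add [NormedSpace ℝ E] {σ : ℝ}
    (h₁ : σ ≤ latticeDist a₁ a₂ ((2 : ℝ)⁻¹ • a₁)) (h₂ : σ ≤ latticeDist a₁ a₂ ((2 : ℝ)⁻¹ • a₂))
    {p q : ℤ} (h : Odd (p + q)) : 2 * σ ≤ ‖p • a₁ + q • a₂‖ := by
  rcases Int.even_or_odd p with hp | hp
  · have := two_mul_latticeDist_half_le (a₁ := a₁) (a₂ := a₂) (i := 0) (j := 1)
      (by simpa using hp) (((Int.odd_add'.1 h).2 hp).sub_odd odd_one)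
    simp only [zero_smul, one_smul, zero_add] at this
    linarith
  · have := two_mul_latticeDist_half_le (a₁ := a₁) (a₂ := a₂) (i := 1) (j := 0)
      (hp.sub_odd odd_one) (by simpa using (Int.odd_add.1 h).1 hp)
    simp only [zero_smul, one_smul, add_zero] at this
    linarith

theorem two_mul_latticeDist_half_add_le [NormedSpace ℝ E] {p q : ℤ} (hp : Odd p) (hq : Odd q) :
    2 * latticeDist a₁ a₂ ((2 : ℝ)⁻¹ • (a₁ + a₂)) ≤ ‖p • a₁ + q • a₂‖ := by
  simpa using two_mul_latticeDist_half_le (a₁ := a₁) (a₂ := a₂) (i := 1) (j := 1)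
    (by simpa [Int.even_sub_one] using hp) (by simpa [Int.even_sub_one] using hq)

theorem two_mul_le_norm_of_mul_sub_mul_eq_one [NormedSpace ℝ E] {σ : ℝ}
    (h₁ : σ ≤ latticeDist a₁ a₂ ((2 : ℝ)⁻¹ • a₁)) (h₂ : σ ≤ latticeDist a₁ a₂ ((2 : ℝ)⁻¹ • a₂))
    {p q P Q : ℤ} (hdet : p * Q - q * P = 1)
    (hvu : ‖p • a₁ + q • a₂‖ ≤ ‖P • a₁ + Q • a₂‖) :
    2 * σ ≤ ‖P • a₁ + Q • a₂‖ ∧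
      min (2 * σ) (2 * latticeDist a₁ a₂ ((2 : ℝ)⁻¹ • (a₁ + a₂))) ≤ ‖p • a₁ + q • a₂‖ := by
  rcases odd_add_or_of_mul_sub_mul_eq_one hdet with h | ⟨hp, hq, h⟩
  · have hv := two_mul_le_norm_of_odd_add h₁ h₂ h
    exact ⟨hv.trans hvu, min_le_of_left_le hv⟩
  · exact ⟨two_mul_le_norm_of_odd_add h₁ h₂ h,
      min_le_of_right_le (two_mul_latticeDist_half_add_le hp hq)⟩

end Lattice

section Plane

variable {a₁ a₂ : EuclideanSpace ℝ (Fin 2)}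

def planeDet (x y : EuclideanSpace ℝ (Fin 2)) : ℝ := x 0 * y 1 - x 1 * y 0

theorem inner_sq_add_planeDet_sq (x y : EuclideanSpace ℝ (Fin 2)) :
    ⟪x, y⟫ ^ 2 + planeDet x y ^ 2 = ‖x‖ ^ 2 * ‖y‖ ^ 2 := by
  simp only [EuclideanSpace.inner_eq_star_dotProduct, dotProduct, Pi.star_apply, star_trivial,
    Fin.sum_univ_two, planeDet, EuclideanSpace.norm_sq_eq, Real.norm_eq_abs, sq_abs]
  ring

theorem planeDet_zsmul_add_zsmul (p q P Q : ℤ) :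
    planeDet (p • a₁ + q • a₂) (P • a₁ + Q • a₂) = ((p * Q - q * P : ℤ) : ℝ) * planeDet a₁ a₂ := by
  simp only [planeDet, PiLp.add_apply, PiLp.smul_apply, zsmul_eq_mul]
  push_cast
  ring

theorem sq_mul_sq_sub_le_planeDet_sq {p q P Q : ℤ} (hdet : p * Q - q * P = 1)
    (hred : |⟪p • a₁ + q • a₂, P • a₁ + Q • a₂⟫| ≤ ‖p • a₁ + q • a₂‖ ^ 2 / 2) :
    ‖p • a₁ + q • a₂‖ ^ 2 * ‖P • a₁ + Q • a₂‖ ^ 2 - (‖p • a₁ + q • a₂‖ ^ 2) ^ 2 / 4 ≤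
      planeDet a₁ a₂ ^ 2 := by
  have h := inner_sq_add_planeDet_sq (p • a₁ + q • a₂) (P • a₁ + Q • a₂)
  rw [planeDet_zsmul_add_zsmul, hdet, Int.cast_one, one_mul] at h
  nlinarith [sq_le_sq' (abs_le.1 hred).1 (abs_le.1 hred).2]

theorem exists_shortest_zsmul_add_zsmul (hind : LinearIndependent ℝ ![a₁, a₂]) :
    ∃ p q : ℤ, p • a₁ + q • a₂ ≠ 0 ∧
      ∀ p' q' : ℤ, p' • a₁ + q' • a₂ ≠ 0 → ‖p • a₁ + q • a₂‖ ≤ ‖p' • a₁ + q' • a₂‖ := by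
  set b := basisOfLinearIndependentOfCardEqFinrank hind (by simp)
  have hL : ∀ x, x ∈ (Submodule.span ℤ (Set.range b)).toAddSubgroup ↔
      ∃ p q : ℤ, p • a₁ + q • a₂ = x := by
    intro x
    rw [Submodule.mem_toAddSubgroup, coe_basisOfLinearIndependentOfCardEqFinrank,
      Matrix.range_cons_cons_empty, Submodule.mem_span_pair]
  have ha₁ : (1 : ℤ) • a₁ + (0 : ℤ) • a₂ ≠ 0 :=
    fun h => one_ne_zero ((zsmul_add_zsmul_eq_zero_iff hind).1 h).1
  obtain ⟨v, hvL, hv, hmin⟩ :=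
    AddSubgroup.exists_norm_le_of_discreteTopology _ ((hL _).2 ⟨1, 0, rfl⟩) ha₁
  obtain ⟨p, q, rfl⟩ := (hL v).1 hvL
  exact ⟨p, q, hv, fun p' q' h => hmin _ ((hL _).2 ⟨p', q', rfl⟩) h⟩

end Plane

/-- Flat systolic estimate for type `B₂` Bieberbach 3-manifolds:
with `L = ℤa₁ + ℤa₂`, `m(w)` the distance from `w` to `L`, `s(L)` the length of a
shortest nonzero lattice vector, and
`σ = min{m(a₁/2), m(a₂/2), 4d, √(m((a₁+a₂)/2)² + 4d²), s(L)}`,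
one has `σ³ ≤ (8/√39)·|det(a₁,a₂)|·d`. -/
theorem stmt3 (a₁ a₂ : EuclideanSpace ℝ (Fin 2))
    (hind : LinearIndependent ℝ ![a₁, a₂]) (d : ℝ) (hd : 0 < d)
    (m : EuclideanSpace ℝ (Fin 2) → ℝ)
    (hm : ∀ w, m w = sInf {r : ℝ | ∃ p q : ℤ, r = ‖w - (p • a₁ + q • a₂)‖})
    (s : ℝ)
    (hs : s = sInf {r : ℝ | ∃ p q : ℤ,
      p • a₁ + q • a₂ ≠ 0 ∧ r = ‖p • a₁ + q • a₂‖})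
    (σ : ℝ)
    (hσ : σ = min (m ((2:ℝ)⁻¹ • a₁))
      (min (m ((2:ℝ)⁻¹ • a₂))
        (min (4 * d)
          (min (Real.sqrt (m ((2:ℝ)⁻¹ • (a₁ + a₂)) ^ 2 + 4 * d ^ 2)) s)))) :
    σ ^ 3 ≤ (8 / Real.sqrt 39) * |a₁ 0 * a₂ 1 - a₁ 1 * a₂ 0| * d := by
  obtain rfl : m = latticeDist a₁ a₂ := funext hm
  rcases le_or_gt σ 0 with hσ0 | hσ0
  · have : 0 ≤ 8 / √39 * |a₁ 0 * a₂ 1 - a₁ 1 * a₂ 0| * d := by positivity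
    nlinarith [pow_two_nonneg σ]
  obtain ⟨hσ₁, hσ₂, hσd, hσt, hσs⟩ := by simpa only [le_min_iff] using hσ.le
  obtain ⟨p, q, hv0, hmin⟩ := exists_shortest_zsmul_add_zsmul hind
  obtain ⟨P, Q, hdet, hred⟩ :=
    (isCoprime_of_forall_norm_le hv0 hmin).exists_mul_sub_mul_eq_one_and_abs_inner_le
      (a₁ := a₁) (a₂ := a₂)
  have hsv : s = ‖p • a₁ + q • a₂‖ := hs ▸ IsLeast.csInf_eq
    ⟨⟨p, q, hv0, rfl⟩, by rintro _ ⟨p', q', h, rfl⟩; exact hmin p' q' h⟩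
  have hvu := hmin P Q fun h => by simp [(zsmul_add_zsmul_eq_zero_iff hind).1 h] at hdet
  obtain ⟨hu, hv⟩ := two_mul_le_norm_of_mul_sub_mul_eq_one hσ₁ hσ₂ hdet hvu
  have hvd : 4 * σ ^ 2 - ‖p • a₁ + q • a₂‖ ^ 2 ≤ 16 * d ^ 2 := by
    have := (Real.le_sqrt hσ0.le (by positivity)).1 hσt
    have ht := latticeDist_nonneg (a₁ := a₁) (a₂ := a₂) ((2 : ℝ)⁻¹ • (a₁ + a₂))
    rcases min_le_iff.1 hv with hv | hv <;> nlinarith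
  have key := thirty_nine_mul_pow_three_le (by positivity)
    (pow_le_pow_left₀ hσ0.le (hsv ▸ hσs) 2) (pow_le_pow_left₀ (norm_nonneg _) hvu 2)
    (by nlinarith) (by nlinarith) hvd (sq_mul_sq_sub_le_planeDet_sq hdet hred)
  change σ ^ 3 ≤ 8 / √39 * |planeDet a₁ a₂| * d
  rw [show 8 / √39 * |planeDet a₁ a₂| * d = 8 * |planeDet a₁ a₂| * d / √39 by ring]
  refine le_div_sqrt_of_mul_sq_le (by norm_num) (by positivity) ?_
  rw [mul_pow, mul_pow, sq_abs]
  linarith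
end

section
/- Let x, y, d be real numbers with x² + y² ≥ 1, |x| ≤ 1/2, y > 0, 1/8 ≤ d ≤ 1/(4√3), and 8d ≥ √(x² + y²). Then (x² + y²)^{3/2}/(8·y·d) ≤ 8/√39. -/
/-!
Write `t = x² + y²`. Since `√t ≤ 8d`, the ratio is at most `t / y`, and `8d ≤ 2/√3` forces
`t ≤ 4/3`. With `x² ≤ 1/4` we get `64 y² ≥ 64 t - 16 ≥ 39 t²`, the last step because
`39 t² - 64 t + 16 = 39 (t - 4/3) (t - 4/13)` is nonpositive for `4/13 ≤ t ≤ 4/3`;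
hence `t / y ≤ 8/√39`, with equality at `t = 4/3`, `x² = 1/4`.
-/

open Real

lemma rpow_three_halves_eq_sqrt_pow_three {t : ℝ} (ht : 0 ≤ t) :
    t ^ ((3 : ℝ) / 2) = √t ^ 3 := by
  rw [rpow_div_two_eq_sqrt _ ht]
  exact_mod_cast rpow_natCast (√t) 3

lemma le_four_thirds_of_sqrt_le {t d : ℝ} (ht : √t ≤ 8 * d) (hd : d ≤ 1 / (4 * √3)) :
    t ≤ 4 / 3 := by
  have h3 : 0 < √3 := by positivity
  have hd' : √3 * (8 * d) ≤ 2 := by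
    rw [le_div_iff₀ (by positivity)] at hd
    linarith
  have : √(3 * t) ≤ √4 := by
    rw [sqrt_mul zero_le_three, show (4 : ℝ) = 2 ^ 2 by norm_num, sqrt_sq zero_le_two]
    calc √3 * √t ≤ √3 * (8 * d) := by gcongr
      _ ≤ 2 := hd'
  have := (sqrt_le_sqrt_iff (by norm_num)).1 this
  linarith

lemma sqrt_thirtyNine_mul_sq_add_sq_le {x y : ℝ} (hx : |x| ≤ 1 / 2) (hy : 0 < y)
    (hlow : 4 / 13 ≤ x ^ 2 + y ^ 2) (hup : x ^ 2 + y ^ 2 ≤ 4 / 3) :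
    √39 * (x ^ 2 + y ^ 2) ≤ 8 * y := by
  have hx2 : x ^ 2 ≤ 1 / 4 := by
    have := pow_le_pow_left₀ (abs_nonneg x) hx 2
    rwa [sq_abs, div_pow, one_pow, show (2 : ℝ) ^ 2 = 4 by norm_num] at this
  have hsq : (√39 * (x ^ 2 + y ^ 2)) ^ 2 ≤ (8 * y) ^ 2 := by
    rw [mul_pow, sq_sqrt (by norm_num)]
    nlinarith [mul_nonneg (sub_nonneg.2 hup) (sub_nonneg.2 hlow)]
  exact (pow_le_pow_iff_left₀ (by positivity) (by positivity) two_ne_zero).1 hsq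

theorem stmt5_general (x y d : ℝ) (h₁ : 1 ≤ x ^ 2 + y ^ 2) (h₂ : |x| ≤ 1 / 2)
    (hy : 0 < y) (h₄ : d ≤ 1 / (4 * Real.sqrt 3))
    (h₅ : Real.sqrt (x ^ 2 + y ^ 2) ≤ 8 * d) :
    (x ^ 2 + y ^ 2) ^ ((3 : ℝ) / 2) / (8 * y * d) ≤ 8 / Real.sqrt 39 := by
  have hs : 1 ≤ √(x ^ 2 + y ^ 2) := one_le_sqrt.2 h₁
  have hd : 0 < d := by linarith
  have key : √39 * (x ^ 2 + y ^ 2) ≤ 8 * y :=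
    sqrt_thirtyNine_mul_sq_add_sq_le h₂ hy (by linarith) (le_four_thirds_of_sqrt_le h₅ h₄)
  rw [rpow_three_halves_eq_sqrt_pow_three (by positivity),
    div_le_div_iff₀ (by positivity) (by positivity)]
  calc √(x ^ 2 + y ^ 2) ^ 3 * √39
      = √(x ^ 2 + y ^ 2) * (√39 * √(x ^ 2 + y ^ 2) ^ 2) := by ring
    _ = √(x ^ 2 + y ^ 2) * (√39 * (x ^ 2 + y ^ 2)) := by rw [sq_sqrt (by positivity)]
    _ ≤ 8 * d * (8 * y) := mul_le_mul h₅ key (by positivity) (by positivity)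
    _ = 8 * (8 * y * d) := by ring

/-- Case computation in the type `B₂` flat systolic estimate:
on the stated domain, `(x² + y²)^{3/2}/(8yd) ≤ 8/√39`. -/
theorem stmt5 (x y d : ℝ) (h₁ : 1 ≤ x ^ 2 + y ^ 2) (h₂ : |x| ≤ 1 / 2)
    (hy : 0 < y) (h₃ : 1 / 8 ≤ d) (h₄ : d ≤ 1 / (4 * Real.sqrt 3))
    (h₅ : Real.sqrt (x ^ 2 + y ^ 2) ≤ 8 * d) :
    (x ^ 2 + y ^ 2) ^ ((3 : ℝ) / 2) / (8 * y * d) ≤ 8 / Real.sqrt 39 :=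
  stmt5_general x y d h₁ h₂ hy h₄ h₅
end

section
/- For every real number d with 1/(4√3) ≤ d ≤ √3/4 one has (16·d² + 1)^{3/2}/(8·d·√(16·d² + 3/4)) ≤ 8/√39, with equality at d = 1/(4√3). -/
/-!
With `t = 16 d²` the constraint on `d` becomes `1/3 ≤ t ≤ 3`, and the square of the quotient is
`(t + 1)³ / (t (4t + 3))`. Comparing it with `64/39` amounts to
`64 t (4t + 3) - 39 (t + 1)³ = (3t - 1)(39 + 42t - 13t²)`, whose factors are both nonnegative
on `[1/3, 3]`; the first one vanishes at `t = 1/3`, i.e. at `d = 1/(4√3)`.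
-/

open Real

lemma rpow_three_halves_eq_sqrt_pow_three_s6 {x : ℝ} (hx : 0 ≤ x) : x ^ ((3 : ℝ) / 2) = √(x ^ 3) := by
  rw [sqrt_eq_rpow, ← rpow_natCast, ← rpow_mul hx]
  norm_num

lemma rpow_three_halves_div_eq_sqrt {d : ℝ} (hd : 0 ≤ d) :
    (16 * d ^ 2 + 1) ^ ((3 : ℝ) / 2) / (8 * d * √(16 * d ^ 2 + 3 / 4)) =
      √((16 * d ^ 2 + 1) ^ 3 / (16 * d ^ 2 * (4 * (16 * d ^ 2) + 3))) := by
  have hden : 8 * d * √(16 * d ^ 2 + 3 / 4) = √(16 * d ^ 2 * (4 * (16 * d ^ 2) + 3)) := by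
    rw [show 16 * d ^ 2 * (4 * (16 * d ^ 2) + 3) = (8 * d) ^ 2 * (16 * d ^ 2 + 3 / 4) by ring,
      sqrt_mul (by positivity), sqrt_sq (by positivity)]
  rw [rpow_three_halves_eq_sqrt_pow_three_s6 (by positivity), hden, sqrt_div' _ (by positivity)]

lemma cube_mul_le_of_mem_Icc {t : ℝ} (h₁ : 1 / 3 ≤ t) (h₃ : t ≤ 3) :
    39 * (t + 1) ^ 3 ≤ 64 * (t * (4 * t + 3)) := by
  have hfactor : 64 * (t * (4 * t + 3)) - 39 * (t + 1) ^ 3 =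
      (3 * t - 1) * (39 + 42 * t - 13 * t ^ 2) := by
    ring
  have hquad : 0 ≤ 39 + 42 * t - 13 * t ^ 2 := by nlinarith
  linarith [mul_nonneg (by linarith : 0 ≤ 3 * t - 1) hquad]

lemma eight_div_sqrt_39 : 8 / √39 = √(64 / 39) := by
  rw [sqrt_div' _ (by norm_num), show (64 : ℝ) = 8 ^ 2 by norm_num, sqrt_sq (by norm_num)]

lemma sqrt_cube_div_le_of_mem_Icc {t : ℝ} (h₁ : 1 / 3 ≤ t) (h₃ : t ≤ 3) :
    √((t + 1) ^ 3 / (t * (4 * t + 3))) ≤ 8 / √39 := by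
  rw [eight_div_sqrt_39]
  apply sqrt_le_sqrt
  rw [div_le_div_iff₀ (by positivity) (by norm_num)]
  linarith [cube_mul_le_of_mem_Icc h₁ h₃]

/-- Case computation in the type `B₂` flat systolic estimate:
for `1/(4√3) ≤ d ≤ √3/4`, `(16d² + 1)^{3/2}/(8d√(16d² + 3/4)) ≤ 8/√39`,
with equality at `d = 1/(4√3)`. -/
theorem stmt6 :
    (∀ d : ℝ, 1 / (4 * Real.sqrt 3) ≤ d → d ≤ Real.sqrt 3 / 4 →
      (16 * d ^ 2 + 1) ^ ((3 : ℝ) / 2) / (8 * d * Real.sqrt (16 * d ^ 2 + 3 / 4))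
        ≤ 8 / Real.sqrt 39) ∧
    (16 * (1 / (4 * Real.sqrt 3)) ^ 2 + 1) ^ ((3 : ℝ) / 2) /
        (8 * (1 / (4 * Real.sqrt 3)) * Real.sqrt (16 * (1 / (4 * Real.sqrt 3)) ^ 2 + 3 / 4))
      = 8 / Real.sqrt 39 := by
  have hd₀ : 16 * (1 / (4 * √3)) ^ 2 = 1 / 3 := by
    rw [div_pow, mul_pow, sq_sqrt (by norm_num)]; norm_num
  refine ⟨fun d hd₁ hd₃ => ?_, ?_⟩
  · have hd : 0 ≤ d := le_trans (by positivity) hd₁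
    have ht₁ : 1 / 3 ≤ 16 * d ^ 2 := hd₀ ▸ by gcongr
    have ht₃ : 16 * d ^ 2 ≤ 3 :=
      calc 16 * d ^ 2 ≤ 16 * (√3 / 4) ^ 2 := by gcongr
        _ = 3 := by rw [div_pow, sq_sqrt (by norm_num)]; norm_num
    rw [rpow_three_halves_div_eq_sqrt hd]
    exact sqrt_cube_div_le_of_mem_Icc ht₁ ht₃
  · rw [rpow_three_halves_div_eq_sqrt (by positivity), hd₀, eight_div_sqrt_39]
    norm_num
end

section
/- Let x, y be real numbers with 1 ≤ x² + y² ≤ 4, |x| ≤ 1/2, and y > 0. Then (x² + y²)^{3/2}/(2·√3·y) ≤ 8/√45. -/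
/-!
With `s = x² + y²`, the bound `|x| ≤ 1/2` gives `y² ≥ s - 1/4`. Squaring both sides turns the
claim into `45 s³ ≤ 768 y²`, which follows from
`768 (s - 1/4) - 45 s³ = 3 (4 - s)(15 s² + 60 s - 16) ≥ 0` for `1 ≤ s ≤ 4`;
equality holds at `s = 4`, `|x| = 1/2`.
-/

open Real

lemma rpow_three_halves_sq {s : ℝ} (hs : 0 ≤ s) : (s ^ ((3 : ℝ) / 2)) ^ 2 = s ^ 3 := by
  rw [← rpow_natCast, ← rpow_mul hs]
  norm_num

lemma cube_le_of_one_le_of_le_four {s : ℝ} (h₁ : 1 ≤ s) (h₄ : s ≤ 4) :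
    45 * s ^ 3 ≤ 768 * (s - 1 / 4) := by
  have hquad : 0 ≤ 15 * s ^ 2 + 60 * s - 16 := by nlinarith
  nlinarith [mul_nonneg (sub_nonneg.2 h₄) hquad]

lemma rpow_three_halves_div_le {s y : ℝ} (hs : 0 ≤ s) (hy : 0 < y)
    (h : 45 * s ^ 3 ≤ 768 * y ^ 2) :
    s ^ ((3 : ℝ) / 2) / (2 * √3 * y) ≤ 8 / √45 := by
  refine (pow_le_pow_iff_left₀ (by positivity) (by positivity) two_ne_zero).1 ?_
  rw [div_pow, div_pow, rpow_three_halves_sq hs, mul_pow, mul_pow,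
    sq_sqrt (by norm_num), sq_sqrt (by norm_num), div_le_div_iff₀ (by positivity) (by norm_num)]
  linarith

/-- Case computation in the type `B₂` flat systolic estimate:
if `1 ≤ x² + y² ≤ 4`, `|x| ≤ 1/2` and `y > 0`, then
`(x² + y²)^{3/2}/(2√3·y) ≤ 8/√45`. -/
theorem stmt8 (x y : ℝ) (h₁ : 1 ≤ x ^ 2 + y ^ 2) (h₂ : x ^ 2 + y ^ 2 ≤ 4)
    (h₃ : |x| ≤ 1 / 2) (hy : 0 < y) :
    (x ^ 2 + y ^ 2) ^ ((3 : ℝ) / 2) / (2 * Real.sqrt 3 * y) ≤ 8 / Real.sqrt 45 := by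
  have hx : x ^ 2 ≤ 1 / 4 := by
    have := sq_le_sq' (abs_le.1 h₃).1 (abs_le.1 h₃).2
    linarith
  refine rpow_three_halves_div_le (by positivity) hy ?_
  linarith [cube_le_of_one_le_of_le_four h₁ h₂]
end

section
/- Let δ ∈ (0, π) satisfy (cos δ − 1)/2 = cos((π − δ)/√2), let D = arccos((cos δ − 1)/2), and let d₀ = √(π² − D²). Then d₀ > π/2 and π²/(2·√2·d₀) > 8/√39. -/
/-!
Since `(π - δ)/√2 ∈ [0, π]`, the defining equation gives `D = (π - δ)/√2`, hence
`d₀² = π² - (π - δ)²/2`, and both claims become polynomial inequalities in `π` and `δ`.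
The first only needs `0 < δ < π`. The second needs `δ < 9/10`: for `δ ≥ 9/10` the left
side `(cos δ - 1)/2` of the equation is below `-1/10`, while `(π - δ)/√2 ≤ π/2 + 1/10`
keeps the right side `cos((π - δ)/√2)` above `-1/10`.
-/

open Real

lemma neg_le_cos_of_le_pi_div_two_add {x t : ℝ} (hx : 0 ≤ x) (ht : 0 ≤ t) (htπ : t ≤ π / 2)
    (hxt : x ≤ π / 2 + t) : -t ≤ cos x :=
  calc -t ≤ -sin t := neg_le_neg (sin_le ht)
    _ = cos (t + π / 2) := (cos_add_pi_div_two t).symm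
    _ ≤ cos x := cos_le_cos_of_nonneg_of_le_pi hx (by linarith) (by linarith)

lemma cos_nine_tenths_lt : cos (9 / 10) < 4 / 5 := by
  have h := (abs_le.mp (cos_bound (x := 9 / 10) (by norm_num [abs_of_pos]))).2
  norm_num [abs_of_pos] at h
  linarith

lemma cos_lt_four_fifths {x : ℝ} (h : 9 / 10 ≤ x) (hx : x ≤ π) : cos x < 4 / 5 :=
  (cos_le_cos_of_nonneg_of_le_pi (by norm_num) hx h).trans_lt cos_nine_tenths_lt

lemma lt_nine_tenths_of_cos_eq {δ : ℝ} (hδ : δ ≤ π)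
    (heq : (cos δ - 1) / 2 = cos ((π - δ) / √2)) : δ < 9 / 10 := by
  by_contra! h
  have hsqrt2 : 7 / 5 < √2 := lt_sqrt_of_sq_lt (by norm_num)
  have hπ := pi_lt_d2
  have hle : (π - δ) / √2 ≤ π / 2 + 1 / 10 := by
    rw [div_le_iff₀ (by positivity)]
    nlinarith
  have hcos := neg_le_cos_of_le_pi_div_two_add (by bound) (by norm_num) (by linarith) hle
  linarith [cos_lt_four_fifths h hδ]

lemma div_sqrt_lt_div {a b c e : ℝ} (hc : 0 ≤ c) (hb : 0 < b) (he : 0 < e)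
    (h : a ^ 2 * e ^ 2 < c ^ 2 * b) : a / √b < c / e := by
  rw [div_lt_div_iff₀ (sqrt_pos.2 hb) he]
  apply lt_of_pow_lt_pow_left₀ 2 (by positivity)
  rwa [mul_pow, mul_pow, sq_sqrt hb.le]

/-- With `δ` the optimal screw angle, `D = arccos((cos δ − 1)/2)` and
`d₀ = √(π² − D²)`, one has `d₀ > π/2` and the singular systolic ratio
`π²/(2√2·d₀)` exceeds the optimal flat ratio `8/√39` for type `B₂`. -/
theorem stmt12 (δ D d₀ : ℝ) (hδ : δ ∈ Set.Ioo 0 π)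
    (heq : (Real.cos δ - 1) / 2 = Real.cos ((π - δ) / Real.sqrt 2))
    (hD : D = Real.arccos ((Real.cos δ - 1) / 2))
    (hd₀ : d₀ = Real.sqrt (π ^ 2 - D ^ 2)) :
    d₀ > π / 2 ∧ π ^ 2 / (2 * Real.sqrt 2 * d₀) > 8 / Real.sqrt 39 := by
  obtain ⟨hδ0, hδπ⟩ := hδ
  have hδ910 := lt_nine_tenths_of_cos_eq hδπ.le heq
  have hD2 : D ^ 2 = (π - δ) ^ 2 / 2 := by
    have hπ_le : π ≤ π * √2 := le_mul_of_one_le_right pi_pos.le (one_le_sqrt.2 one_le_two)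
    rw [hD, heq, arccos_cos (by bound) (by rw [div_le_iff₀ (by positivity)]; linarith [hπ_le]),
      div_pow, sq_sqrt zero_le_two]
  have hd₀2 : d₀ ^ 2 = π ^ 2 - (π - δ) ^ 2 / 2 := by
    rw [hd₀, sq_sqrt (by nlinarith), hD2]
  have hπ := pi_gt_d2
  have hπ' := pi_lt_d2
  have hd₀_gt : π / 2 < d₀ := by
    rw [hd₀, lt_sqrt (by positivity), hD2]
    nlinarith
  refine ⟨hd₀_gt, div_sqrt_lt_div (by positivity) (by norm_num)
    (mul_pos (by positivity) (by linarith [pi_pos])) ?_⟩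
  have hgap : (π - 9 / 10) ^ 2 < (π - δ) ^ 2 := by gcongr; linarith
  rw [mul_pow, mul_pow, sq_sqrt zero_le_two, hd₀2]
  -- `39π⁴ - 512π² + 256(π - 9/10)²` has positive coefficients as a polynomial in `π - 3.14`.
  have hu := sub_pos.2 hπ
  nlinarith [pow_pos hu 2, pow_pos hu 3, pow_pos hu 4]
end

section
/- For every α ∈ [0, π], the function β ↦ arccos(sin²β + cos²β·cos α) is antitone (monotonically non-increasing) on the interval [0, π/2]. -/
open Real Set

lemma monotoneOn_sin_sq : MonotoneOn (fun x => sin x ^ 2) (Icc 0 (π / 2)) := by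
  intro x hx y hy hxy
  have hsin_x : 0 ≤ sin x := sin_nonneg_of_nonneg_of_le_pi hx.1 (by linarith [hx.2, pi_pos])
  exact pow_le_pow_left₀ hsin_x (sin_le_sin_of_le_of_le_pi_div_two (by linarith [hx.1, pi_pos])
    hy.2 hxy) 2

/-- Writing `sin² x + cos² x · c = c + sin² x · (1 - c)` reduces this to `monotoneOn_sin_sq`. -/
lemma monotoneOn_sin_sq_add_cos_sq_mul {c : ℝ} (hc : c ≤ 1) :
    MonotoneOn (fun x => sin x ^ 2 + cos x ^ 2 * c) (Icc 0 (π / 2)) := by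
  intro x hx y hy hxy
  have hsq := monotoneOn_sin_sq hx hy hxy
  simp only at hsq ⊢
  nlinarith [sin_sq_add_cos_sq x, sin_sq_add_cos_sq y]

theorem stmt13_general (α : ℝ) :
    AntitoneOn (fun β : ℝ => Real.arccos (Real.sin β ^ 2 + Real.cos β ^ 2 * Real.cos α))
      (Set.Icc 0 (π / 2)) :=
  antitone_arccos.comp_monotoneOn (monotoneOn_sin_sq_add_cos_sq_mul (cos_le_one α))

/-- On the round sphere, the distance `arccos(sin²β + cos²β·cos α)` between two
points of latitude `β` with longitudes differing by `α` is non-increasing in the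
latitude `β ∈ [0, π/2]`, for each `α ∈ [0, π]`. -/
theorem stmt13 (α : ℝ) (hα : α ∈ Set.Icc 0 π) :
    AntitoneOn (fun β : ℝ => Real.arccos (Real.sin β ^ 2 + Real.cos β ^ 2 * Real.cos α))
      (Set.Icc 0 (π / 2)) :=
  stmt13_general α
end

section
/- The function H(β) = 2·arccos(√2·sin β) − √2·arccos(tan β) is antitone (monotonically non-increasing) on the interval [0, π/4], satisfies H(π/4) = 0, and consequently H(β) ≥ 0 for all β ∈ [0, π/4]. -/
/-!
Both `1 - (√2 sin β)²` and `1 - tan² β` are multiples of `cos 2β`, so the two arccosine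
derivatives combine into `H'(β) = -√2 · √(cos 2β) / cos β`, which is negative for `|β| < π/4`.
Hence `H` strictly decreases on `[-π/4, π/4]`, down to `H(π/4) = 2 arccos 1 - √2 arccos 1 = 0`.
-/

open Real Set

/-- The paper's `H(β)`: a point of latitude `β` lies at distance `α/√2 + H(β)` from its image
under the rotation `r_α`. -/
noncomputable def distanceExcess (β : ℝ) : ℝ :=
  2 * arccos (√2 * sin β) - √2 * arccos (tan β)

lemma cos_pos_of_mem_Icc_neg_pi_div_four {x : ℝ} (hx : x ∈ Icc (-(π / 4)) (π / 4)) :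
    0 < cos x :=
  cos_pos_of_mem_Ioo ⟨by linarith [hx.1, pi_pos], by linarith [hx.2, pi_pos]⟩

lemma cos_two_mul_pos_of_mem_Ioo {x : ℝ} (hx : x ∈ Ioo (-(π / 4)) (π / 4)) :
    0 < cos (2 * x) :=
  cos_pos_of_mem_Ioo ⟨by linarith [hx.1], by linarith [hx.2]⟩

lemma one_sub_sqrt_two_mul_sin_sq (x : ℝ) : 1 - (√2 * sin x) ^ 2 = cos (2 * x) := by
  rw [mul_pow, sq_sqrt zero_le_two, cos_two_mul, cos_sq']
  ring

lemma one_sub_tan_sq {x : ℝ} (hx : cos x ≠ 0) : 1 - tan x ^ 2 = cos (2 * x) / cos x ^ 2 := by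
  rw [tan_eq_sin_div_cos, div_pow, cos_two_mul]
  field_simp
  linear_combination -sin_sq_add_cos_sq x

lemma hasDerivAt_arccos_sqrt_two_mul_sin {x : ℝ} (hx : 0 < cos (2 * x)) :
    HasDerivAt (fun β => arccos (√2 * sin β)) (-(√2 * cos x / √(cos (2 * x)))) x := by
  have hlt : (√2 * sin x) ^ 2 < 1 := by linarith [one_sub_sqrt_two_mul_sin_sq x]
  have hne : √2 * sin x ≠ -1 ∧ √2 * sin x ≠ 1 := by
    constructor <;> rintro h <;> rw [h] at hlt <;> norm_num at hlt
  refine ((hasDerivAt_arccos hne.1 hne.2).comp x ((hasDerivAt_sin x).const_mul √2)).congr_deriv ?_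
  rw [one_sub_sqrt_two_mul_sin_sq]
  ring

lemma hasDerivAt_arccos_tan {x : ℝ} (hc : 0 < cos x) (hx : 0 < cos (2 * x)) :
    HasDerivAt (fun β => arccos (tan β)) (-(1 / (cos x * √(cos (2 * x))))) x := by
  have hlt : tan x ^ 2 < 1 := by
    have : 0 < 1 - tan x ^ 2 := by rw [one_sub_tan_sq hc.ne']; positivity
    linarith
  have hne : tan x ≠ -1 ∧ tan x ≠ 1 := by
    constructor <;> rintro h <;> rw [h] at hlt <;> norm_num at hlt
  refine ((hasDerivAt_arccos hne.1 hne.2).comp x (hasDerivAt_tan hc.ne')).congr_deriv ?_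
  rw [one_sub_tan_sq hc.ne', sqrt_div' _ (sq_nonneg _), sqrt_sq hc.le]
  field_simp

lemma hasDerivAt_distanceExcess {x : ℝ} (hc : 0 < cos x) (hx : 0 < cos (2 * x)) :
    HasDerivAt distanceExcess (-(√2 * √(cos (2 * x)) / cos x)) x := by
  refine (((hasDerivAt_arccos_sqrt_two_mul_sin hx).const_mul 2).sub
    ((hasDerivAt_arccos_tan hc hx).const_mul √2)).congr_deriv ?_
  have hs : √(cos (2 * x)) ^ 2 = 2 * cos x ^ 2 - 1 := by
    rw [sq_sqrt hx.le, cos_two_mul]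
  field_simp
  linear_combination hs

lemma continuousOn_distanceExcess : ContinuousOn distanceExcess (Icc (-(π / 4)) (π / 4)) := by
  refine (Continuous.continuousOn (by fun_prop)).sub (continuousOn_const.mul ?_)
  refine continuous_arccos.comp_continuousOn fun x hx => ?_
  exact (continuousAt_tan.2 (cos_pos_of_mem_Icc_neg_pi_div_four hx).ne').continuousWithinAt

lemma strictAntiOn_distanceExcess : StrictAntiOn distanceExcess (Icc (-(π / 4)) (π / 4)) := by
  refine strictAntiOn_of_deriv_neg (convex_Icc _ _) continuousOn_distanceExcess fun x hx => ?_
  rw [interior_Icc] at hx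
  have hc := cos_pos_of_mem_Icc_neg_pi_div_four (Ioo_subset_Icc_self hx)
  have h2 := cos_two_mul_pos_of_mem_Ioo hx
  rw [(hasDerivAt_distanceExcess hc h2).deriv, neg_lt_zero]
  positivity

lemma distanceExcess_pi_div_four : distanceExcess (π / 4) = 0 := by
  have h : √2 * (√2 / 2) = 1 := by
    rw [mul_div_assoc', mul_self_sqrt zero_le_two, div_self two_ne_zero]
  rw [distanceExcess, sin_pi_div_four, tan_pi_div_four, h, arccos_one]
  ring

/-- The function `H(β) = 2·arccos(√2·sin β) − √2·arccos(tan β)` is antitone on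
`[0, π/4]`, vanishes at `π/4`, and hence is nonnegative on `[0, π/4]`. -/
theorem stmt14 :
    AntitoneOn (fun β : ℝ => 2 * Real.arccos (Real.sqrt 2 * Real.sin β)
        - Real.sqrt 2 * Real.arccos (Real.tan β)) (Set.Icc 0 (π / 4)) ∧
    (2 * Real.arccos (Real.sqrt 2 * Real.sin (π / 4))
        - Real.sqrt 2 * Real.arccos (Real.tan (π / 4)) = 0) ∧
    ∀ β ∈ Set.Icc 0 (π / 4),
      0 ≤ 2 * Real.arccos (Real.sqrt 2 * Real.sin β)
        - Real.sqrt 2 * Real.arccos (Real.tan β) := by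
  have hsub : Icc 0 (π / 4) ⊆ Icc (-(π / 4)) (π / 4) :=
    Icc_subset_Icc_left (by linarith [pi_pos])
  have hanti : AntitoneOn distanceExcess (Icc 0 (π / 4)) :=
    strictAntiOn_distanceExcess.antitoneOn.mono hsub
  refine ⟨hanti, distanceExcess_pi_div_four, fun β hβ => ?_⟩
  have hend : π / 4 ∈ Icc 0 (π / 4) := right_mem_Icc.2 (by positivity)
  calc (0 : ℝ) = distanceExcess (π / 4) := distanceExcess_pi_div_four.symm
    _ ≤ distanceExcess β := hanti hβ hend hβ.2
end
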